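/- arXiv:2411.18488 — 3 statements merged into one kernel-verified Lean document; each statement's English description precedes it below -/
import Mathlib

section
/- Let a ≥ 5 and b > a, and let L be the line arrangement in the complex projective plane consisting of a distinct lines passing through a point p_1 and b distinct lines passing through a point p_2 ≠ p_1, where the line joining p_1 and p_2 belongs to both families (so L consists of k = a + b − 1 lines, t_2(L) = (a−1)(b−1), t_a(L) = t_b(L) = 1). Then the Levi graph G(L) contains no induced cycle of length 10. -/
open scoped LinearAlgebra.Projectivization
open Projectivization

/-- The complex projective plane. -/
abbrev ProjPoint := ℙ ℂ (Fin 3 → ℂ)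

/-- A subset of the projective plane is a (projective) line if it is the zero locus of a
nonzero linear form. -/
def IsProjLine (L : Set ProjPoint) : Prop :=
  ∃ f : (Fin 3 → ℂ) →ₗ[ℂ] ℂ, f ≠ 0 ∧ L = {p | p.submodule ≤ LinearMap.ker f}

/-- The line in the projective plane with equation `a*x + b*y + c*z = 0`. -/
def projLine (a b c : ℂ) : Set ProjPoint :=
  {p : ProjPoint | ∀ v ∈ p.submodule, a * v 0 + b * v 1 + c * v 2 = 0}

/-- An arrangement of `k` distinct lines in the complex projective plane. -/
structure LineArrangement (k : ℕ) where
  line : Fin k → Set ProjPoint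
  isLine : ∀ i, IsProjLine (line i)
  inj : Function.Injective line

namespace LineArrangement

variable {k : ℕ} (A : LineArrangement k)

/-- The multiplicity of a point: the number of lines of the arrangement passing through it. -/
noncomputable def mult (p : ProjPoint) : ℕ :=
  Set.ncard {i : Fin k | p ∈ A.line i}

/-- The singular points of the arrangement: points lying on at least two of the lines. -/
def sing : Set ProjPoint := {p | 2 ≤ A.mult p}

/-- `A.t r` is the number of points of multiplicity exactly `r`. -/
noncomputable def t (r : ℕ) : ℕ := Set.ncard {p | A.mult p = r}

/-- The Levi graph of a line arrangement: the bipartite graph on `Sing(L) ⊔ L` where a point is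
adjacent to a line iff the point lies on the line. -/
def levi : SimpleGraph (↥A.sing ⊕ Fin k) where
  Adj v w :=
    match v, w with
    | Sum.inl p, Sum.inr i => p.1 ∈ A.line i
    | Sum.inr i, Sum.inl p => p.1 ∈ A.line i
    | _, _ => False
  symm := by
    constructor
    rintro (p | i) (q | j) h <;> simp_all
  loopless := by
    constructor
    rintro (p | i) h <;> simp_all

end LineArrangement

/-- A simple graph has an induced cycle of length `n` if there is an induced subgraph
isomorphic to the cycle graph `C_n`, i.e. a graph embedding of `C_n`. -/
def HasInducedCycle {V : Type*} (G : SimpleGraph V) (n : ℕ) : Prop :=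
  Nonempty (SimpleGraph.cycleGraph n ↪g G)


/-! An induced 10-cycle in the Levi graph is a pentagon: five lines `ℓ₀, …, ℓ₄` such that the
point `ℓₓ ∩ ℓₓ₊₁` lies on no other of the five lines. No three lines of a pentagon are
concurrent, since any three indices mod 5 contain two consecutive ones `x, x + 1`, and two distinct
lines meet in only one point. If every line passes through `p₁` or `p₂`, one of these points lies on
three of the five lines. -/

open Finset SimpleGraph

lemma IsProjLine.eq_of_mem_of_mem {L M : Set ProjPoint} (hL : IsProjLine L) (hM : IsProjLine M)
    {p q : ProjPoint} (hpq : p ≠ q) (hpL : p ∈ L) (hqL : q ∈ L) (hpM : p ∈ M) (hqM : q ∈ M) :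
    L = M := by
  obtain ⟨f, hf, rfl⟩ := hL
  obtain ⟨g, hg, rfl⟩ := hM
  have finrank_ker {φ : Module.Dual ℂ (Fin 3 → ℂ)} (hφ : φ ≠ 0) :
      Module.finrank ℂ (LinearMap.ker φ) = 2 := by
    have := Module.Dual.finrank_ker_add_one_of_ne_zero hφ
    simp only [Module.finrank_fin_fun] at this
    omega
  simp only [Set.mem_ofPred_eq, ← Submodule.mem_projectivization_iff_submodule_le] at *
  rw [Projectivization.line_unique hpq _ _ (finrank_ker hf) (finrank_ker hg) hpL hqL hpM hqM]

lemma Fin.card_le_two_of_add_one_mem_imp_subset (S : Finset (Fin 5))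
    (h : ∀ x ∈ S, x + 1 ∈ S → S ⊆ {x, x + 1}) : #S ≤ 2 := by
  revert S
  decide

lemma cycleGraph_ten_adj_odd_even (x z : Fin 5) :
    (cycleGraph 10).Adj ⟨2 * x + 1, by omega⟩ ⟨2 * z, by omega⟩ ↔ z = x ∨ z = x + 1 := by
  revert x z
  decide

namespace LineArrangement

variable {k : ℕ} (A : LineArrangement k)

lemma eq_of_mem_line_of_mem_line {i j : Fin k} (hij : i ≠ j) {p q : ProjPoint}
    (hpi : p ∈ A.line i) (hpj : p ∈ A.line j) (hqi : q ∈ A.line i) (hqj : q ∈ A.line j) :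
    p = q := by
  by_contra hpq
  exact hij (A.inj ((A.isLine i).eq_of_mem_of_mem (A.isLine j) hpq hpi hqi hpj hqj))

lemma isRight_eq_not_of_levi_adj {u v : A.sing ⊕ Fin k} (h : A.levi.Adj u v) :
    u.isRight = !v.isRight := by
  rcases u with p | i <;> rcases v with q | j <;> simp_all [levi]

lemma isRight_levi_cycle_ten (e : cycleGraph 10 ↪g A.levi) (h0 : (e 0).isRight)
    (i : Fin 10) : (e i).isRight = decide (Even i.val) := by
  induction i using Fin.induction with
  | zero => simpa using h0
  | succ i ih =>
    have hadj : ∀ j : Fin 9, (cycleGraph 10).Adj j.succ j.castSucc := by decide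
    rw [A.isRight_eq_not_of_levi_adj (e.map_adj_iff.2 (hadj i)), ih]
    simp [Nat.even_add_one, -Nat.not_even_iff_odd]

structure Pentagon where
  line : Fin 5 → Fin k
  vertex : Fin 5 → ProjPoint
  line_injective : Function.Injective line
  vertex_mem_iff : ∀ x z, vertex x ∈ A.line (line z) ↔ z = x ∨ z = x + 1

variable {A}

lemma nonempty_pentagon_of_embedding (e : cycleGraph 10 ↪g A.levi) (h0 : (e 0).isRight) :
    Nonempty A.Pentagon := by
  have parity := A.isRight_levi_cycle_ten e h0
  have hline (x : Fin 5) : ∃ i, e ⟨2 * x, by omega⟩ = .inr i :=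
    Sum.isRight_iff.1 (by simp [parity])
  have hpoint (x : Fin 5) : ∃ p, e ⟨2 * x + 1, by omega⟩ = .inl p :=
    Sum.isLeft_iff.1 (by simp [← Sum.not_isRight, parity])
  choose l hl using hline
  choose q hq using hpoint
  refine ⟨⟨l, fun x ↦ q x, fun x y hxy ↦ ?_, fun x z ↦ ?_⟩⟩
  · have := e.injective ((hl x).trans ((congrArg Sum.inr hxy).trans (hl y).symm))
    simp only [Fin.mk.injEq] at this
    omega
  · rw [← cycleGraph_ten_adj_odd_even, ← e.map_adj_iff, hq, hl]
    rfl

lemma nonempty_pentagon_of_hasInducedCycle_ten (h : HasInducedCycle A.levi 10) :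
    Nonempty A.Pentagon := by
  obtain ⟨e⟩ := h
  by_cases h0 : (e 0).isRight
  · exact nonempty_pentagon_of_embedding e h0
  · refine nonempty_pentagon_of_embedding (e.comp ⟨(Equiv.addRight 1).toEmbedding, by decide⟩) ?_
    have hadj : (cycleGraph 10).Adj 1 0 := by decide
    change (e 1).isRight = true
    simpa [h0] using A.isRight_eq_not_of_levi_adj (e.map_adj_iff.2 hadj)

namespace Pentagon

variable (π : A.Pentagon)

lemma eq_vertex_of_mem_line {P : ProjPoint} {x : Fin 5} (h : P ∈ A.line (π.line x))
    (h' : P ∈ A.line (π.line (x + 1))) : P = π.vertex x :=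
  A.eq_of_mem_line_of_mem_line (π.line_injective.ne (by simp)) h h'
    ((π.vertex_mem_iff x x).2 (.inl rfl)) ((π.vertex_mem_iff x (x + 1)).2 (.inr rfl))

open scoped Classical in
lemma card_lines_through_le_two (P : ProjPoint) : #{x | P ∈ A.line (π.line x)} ≤ 2 := by
  refine Fin.card_le_two_of_add_one_mem_imp_subset _ fun x hx hx' z hz ↦ ?_
  simp only [mem_filter, mem_univ, true_and, mem_insert, mem_singleton] at hx hx' hz ⊢
  rw [← π.vertex_mem_iff, ← π.eq_vertex_of_mem_line hx hx']
  exact hz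

end Pentagon

theorem not_hasInducedCycle_ten_of_forall_mem_or_mem {p₁ p₂ : ProjPoint}
    (h : ∀ i, p₁ ∈ A.line i ∨ p₂ ∈ A.line i) : ¬ HasInducedCycle A.levi 10 := by
  classical
  intro hC
  obtain ⟨π⟩ := nonempty_pentagon_of_hasInducedCycle_ten hC
  have hcover : (univ : Finset (Fin 5)) ⊆
      ({x | p₁ ∈ A.line (π.line x)} : Finset _) ∪ ({x | p₂ ∈ A.line (π.line x)} : Finset _) := by
    intro x _
    simpa using h (π.line x)
  have := (card_le_card hcover).trans (card_union_le _ _)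
  have h₁ := π.card_lines_through_le_two p₁
  have h₂ := π.card_lines_through_le_two p₂
  simp only [card_univ, Fintype.card_fin] at this
  omega

end LineArrangement

theorem two_modular_points_no_induced_ten_general (a b : ℕ)
    (A : LineArrangement (a + b - 1)) (p₁ p₂ : ProjPoint)
    (h₁ : ∀ i : Fin (a + b - 1), (i : ℕ) < a → p₁ ∈ A.line i)
    (h₂ : ∀ i : Fin (a + b - 1), a - 1 ≤ (i : ℕ) → p₂ ∈ A.line i) :
    ¬ HasInducedCycle A.levi 10 :=
  A.not_hasInducedCycle_ten_of_forall_mem_or_mem fun i ↦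
    (lt_or_ge (i : ℕ) a).imp (h₁ i) fun h ↦ h₂ i (by omega)

/-- A supersolvable arrangement with two modular points: `a ≥ 5` lines through
`p₁`, `b > a` lines through `p₂ ≠ p₁`, sharing the joining line, so `k = a + b - 1` lines.
Its Levi graph has no induced cycle of length `10`. -/
theorem two_modular_points_no_induced_ten (a b : ℕ) (ha : 5 ≤ a) (hb : a < b)
    (A : LineArrangement (a + b - 1)) (p₁ p₂ : ProjPoint) (hne : p₁ ≠ p₂)
    (h₁ : ∀ i : Fin (a + b - 1), (i : ℕ) < a → p₁ ∈ A.line i)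
    (h₂ : ∀ i : Fin (a + b - 1), a - 1 ≤ (i : ℕ) → p₂ ∈ A.line i) :
    ¬ HasInducedCycle A.levi 10 :=
  two_modular_points_no_induced_ten_general a b A p₁ p₂ h₁ h₂
end

section
/- Let L = {ℓ_1,…,ℓ_k} be a line arrangement in the complex projective plane with k ≥ 10 lines, let q be the largest integer with t_q(L) ≠ 0, and suppose the lines ℓ_1,…,ℓ_q all pass through one common point. If k = 2q − 1 and t_{k−q}(L) = 0 (i.e. t_{q−1}(L) = 0), then the Levi graph G(L) contains an induced cycle of length 10 if and only if t_q(L) = 1. -/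
open scoped LinearAlgebra.Projectivization
open Projectivization

/-!
An induced `10`-cycle in the Levi graph is the same thing as a pentagon in the arrangement: five
lines `M 0, …, M 4` and five points `P i = M i ∩ M (i + 1)` with no further incidences, or
equivalently five lines of which no three are concurrent.

If `t_q ≥ 2`, a second point `a ≠ c` of multiplicity `q` exists. Two points share at most one
line, so `k = 2q - 1` forces every line through `a` or `c`; but a point lies on at most two sides
of a pentagon, so `a` and `c` cannot meet all five sides.

If `t_q = 1` and `t_{q-1} = 0`, the `q - 1` lines missing `c` have no common point, since it would
have multiplicity `q - 1` or `q`. Hence three of them form a triangle. Its three vertices lie on at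
most three of the `q ≥ 6` lines through `c`, and two of the remaining ones together with the
triangle are five lines with no three concurrent.
-/

theorem finrank_ker_eq_two {K : Type*} [Field K] {f : (Fin 3 → K) →ₗ[K] K} (hf : f ≠ 0) :
    Module.finrank K (LinearMap.ker f) = 2 := by
  have h := Module.Dual.finrank_ker_add_one_of_ne_zero hf
  rw [Module.finrank_fin_fun] at h
  omega

theorem Fin.add_one_add_one_ne_self {n : ℕ} (i : Fin (n + 3)) : i + 1 + 1 ≠ i := by
  rw [Ne, add_assoc, add_eq_left]
  simp only [Fin.ext_iff, Fin.val_add, Fin.val_one, Fin.val_zero]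
  rw [Nat.mod_eq_of_lt (by omega)]
  omega

theorem Fin.apply_eq_apply_zero_of_forall_add_one {n : ℕ} {α : Type*} {f : Fin (n + 1) → α}
    (h : ∀ i, f (i + 1) = f i) (i : Fin (n + 1)) : f i = f 0 := by
  induction i using Fin.induction with
  | zero => rfl
  | succ i ih => rw [← Fin.coeSucc_eq_succ, h, ih]

namespace IsProjLine

theorem exists_mem_inter {L₁ L₂ : Set ProjPoint} (h₁ : IsProjLine L₁) (h₂ : IsProjLine L₂) :
    ∃ p, p ∈ L₁ ∧ p ∈ L₂ := by
  obtain ⟨f, hf, rfl⟩ := h₁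
  obtain ⟨g, hg, rfl⟩ := h₂
  have hsup := Submodule.finrank_le (LinearMap.ker f ⊔ LinearMap.ker g)
  have hsum := Submodule.finrank_sup_add_finrank_inf_eq (LinearMap.ker f) (LinearMap.ker g)
  rw [Module.finrank_fin_fun, finrank_ker_eq_two hf, finrank_ker_eq_two hg] at *
  have hpos : 0 < Module.finrank ℂ ↥(LinearMap.ker f ⊓ LinearMap.ker g) := by omega
  obtain ⟨v, hv, hv0⟩ :=
    Submodule.exists_mem_ne_zero_of_ne_bot (Submodule.one_le_finrank_iff.mp hpos)
  refine ⟨mk ℂ v hv0, ?_, ?_⟩ <;>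
    simp only [Set.mem_ofPred_eq, submodule_mk, Submodule.span_singleton_le_iff_mem]
  exacts [(Submodule.mem_inf.mp hv).1, (Submodule.mem_inf.mp hv).2]

theorem eq_of_mem_of_mem_s5 {L₁ L₂ : Set ProjPoint} (h₁ : IsProjLine L₁) (h₂ : IsProjLine L₂)
    {p p' : ProjPoint} (hp : p ≠ p') (hp₁ : p ∈ L₁) (hp'₁ : p' ∈ L₁) (hp₂ : p ∈ L₂)
    (hp'₂ : p' ∈ L₂) : L₁ = L₂ := by
  obtain ⟨f, hf, rfl⟩ := h₁
  obtain ⟨g, hg, rfl⟩ := h₂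
  have hinf : Module.finrank ℂ ↥(p.submodule ⊓ p'.submodule) = 0 := by
    by_contra hpos
    have h₁ : p.submodule ⊓ p'.submodule = p.submodule :=
      Submodule.eq_of_le_of_finrank_le inf_le_left (by rw [finrank_submodule]; omega)
    have h₂ : p.submodule ⊓ p'.submodule = p'.submodule :=
      Submodule.eq_of_le_of_finrank_le inf_le_right (by rw [finrank_submodule]; omega)
    exact hp (submodule_injective (h₁.symm.trans h₂))
  have hsup : Module.finrank ℂ ↥(p.submodule ⊔ p'.submodule) = 2 := by
    have := Submodule.finrank_sup_add_finrank_inf_eq p.submodule p'.submodule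
    rw [hinf, finrank_submodule, finrank_submodule] at this
    omega
  have hker : ∀ h : (Fin 3 → ℂ) →ₗ[ℂ] ℂ, h ≠ 0 → p.submodule ≤ LinearMap.ker h →
      p'.submodule ≤ LinearMap.ker h → LinearMap.ker h = p.submodule ⊔ p'.submodule :=
    fun h hh hph hph' => (Submodule.eq_of_le_of_finrank_le (sup_le hph hph')
      (by rw [hsup, finrank_ker_eq_two hh])).symm
  simp only [hker f hf hp₁ hp'₁, hker g hg hp₂ hp'₂]

end IsProjLine

namespace LineArrangement

variable {k : ℕ} (A : LineArrangement k)

def linesThrough (p : ProjPoint) : Set (Fin k) := {i | p ∈ A.line i}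

variable {A} {p p' : ProjPoint} {i j : Fin k}

theorem mult_eq_ncard_linesThrough : A.mult p = (A.linesThrough p).ncard := rfl

theorem exists_mem_lines (i j : Fin k) : ∃ p, p ∈ A.line i ∧ p ∈ A.line j :=
  (A.isLine i).exists_mem_inter (A.isLine j)

theorem eq_of_mem_lines (hij : i ≠ j) (hpi : p ∈ A.line i) (hpj : p ∈ A.line j)
    (hp'i : p' ∈ A.line i) (hp'j : p' ∈ A.line j) : p = p' := by
  by_contra hp
  exact hij (A.inj ((A.isLine i).eq_of_mem_of_mem_s5 (A.isLine j) hp hpi hp'i hpj hp'j))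

theorem ncard_linesThrough_inter_le_one (hp : p ≠ p') :
    (A.linesThrough p ∩ A.linesThrough p').ncard ≤ 1 :=
  (Set.ncard_le_one_iff).mpr fun {i j} hi hj => by
    by_contra hij
    exact hp (eq_of_mem_lines hij hi.1 hj.1 hi.2 hj.2)

theorem two_le_mult_of_mem_lines (hij : i ≠ j) (hpi : p ∈ A.line i) (hpj : p ∈ A.line j) :
    2 ≤ A.mult p := by
  rw [← Set.ncard_pair hij]
  exact Set.ncard_le_ncard (Set.pair_subset hpi hpj)

theorem sing_finite : A.sing.Finite := by
  have hsub : A.sing ⊆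
      ⋃ ij : Fin k × Fin k, {p | ij.1 ≠ ij.2 ∧ p ∈ A.line ij.1 ∧ p ∈ A.line ij.2} := by
    intro p hp
    obtain ⟨i, j, hi, hj, hij⟩ := (Set.one_lt_ncard_iff).mp hp
    exact Set.mem_iUnion.mpr ⟨(i, j), hij, hi, hj⟩
  refine (Set.finite_iUnion fun ij => Set.Subsingleton.finite ?_).subset hsub
  rintro p ⟨hij, hp₁, hp₂⟩ p' ⟨-, hp'₁, hp'₂⟩
  exact eq_of_mem_lines hij hp₁ hp₂ hp'₁ hp'₂

theorem t_pos_of_mult_eq {r : ℕ} (hr : 2 ≤ r) (hp : A.mult p = r) : 0 < A.t r :=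
  (Set.ncard_pos (A.sing_finite.subset fun _ hp' => hr.trans_eq hp'.symm)).mpr ⟨p, hp⟩

variable {q : ℕ}

theorem mult_le_of_t_eq_zero (hqmax : ∀ r, q < r → A.t r = 0) (hp : 2 ≤ A.mult p) :
    A.mult p ≤ q := by
  by_contra h
  exact (t_pos_of_mult_eq hp rfl).ne' (hqmax _ (not_le.mp h))

theorem mult_eq_of_forall_lt_mem {c : ProjPoint} (hq : 2 ≤ q) (hqk : q ≤ k)
    (hqmax : ∀ r, q < r → A.t r = 0) (hc : ∀ i : Fin k, (i : ℕ) < q → c ∈ A.line i) :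
    A.mult c = q := by
  have hle : q ≤ A.mult c :=
    calc q = (Set.range (Fin.castLE hqk)).ncard := by
          rw [Set.ncard_range_of_injective (Fin.castLE_injective hqk), Nat.card_eq_fintype_card,
            Fintype.card_fin]
      _ ≤ A.mult c := Set.ncard_le_ncard (Set.range_subset_iff.mpr fun i => hc _ i.isLt)
  exact le_antisymm (mult_le_of_t_eq_zero hqmax (hq.trans hle)) hle

theorem le_mult_add_mult_of_forall_mem_or_mem (h : ∀ i, p ∈ A.line i ∨ p' ∈ A.line i) :
    k ≤ A.mult p + A.mult p' := by
  calc k = (Set.univ : Set (Fin k)).ncard := by simp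
    _ ≤ (A.linesThrough p ∪ A.linesThrough p').ncard :=
        Set.ncard_le_ncard fun i _ => h i
    _ ≤ A.mult p + A.mult p' := Set.ncard_union_le _ _

theorem forall_mem_or_mem_of_lt_mult_add_mult (hp : p ≠ p') (h : k < A.mult p + A.mult p') :
    ∀ i, p ∈ A.line i ∨ p' ∈ A.line i := by
  by_contra! hi
  obtain ⟨i₀, hi₀, hi₀'⟩ := hi
  have hsub : A.linesThrough p ∪ A.linesThrough p' ⊆ {i₀}ᶜ := by
    rintro i (hi | hi) rfl
    exacts [hi₀ hi, hi₀' hi]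
  have hunion := Set.ncard_union_add_ncard_inter (A.linesThrough p) (A.linesThrough p')
  have hcompl : ({i₀}ᶜ : Set (Fin k)).ncard = k - 1 := by
    rw [Set.ncard_compl, Set.ncard_singleton, Nat.card_eq_fintype_card, Fintype.card_fin]
  have := Set.ncard_le_ncard hsub
  have := ncard_linesThrough_inter_le_one (A := A) hp
  have := i₀.pos
  rw [mult_eq_ncard_linesThrough, mult_eq_ncard_linesThrough] at h
  omega

theorem mult_sub_card_le_ncard_linesThrough_diff (F : Finset ProjPoint) (hF : p ∉ F) :
    A.mult p - F.card ≤ (A.linesThrough p \ ⋃ x ∈ F, A.linesThrough x).ncard := by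
  classical
  induction F using Finset.induction_on with
  | empty => simp [mult_eq_ncard_linesThrough]
  | insert x F hx ih =>
    rw [Finset.mem_insert, not_or] at hF
    rw [Finset.set_biUnion_insert, Set.union_comm, ← Set.sdiff_sdiff,
      Finset.card_insert_of_notMem hx]
    have hsplit := Set.ncard_inter_add_ncard_sdiff_eq_ncard
      (A.linesThrough p \ ⋃ y ∈ F, A.linesThrough y) (A.linesThrough x)
    have hinter : ((A.linesThrough p \ ⋃ y ∈ F, A.linesThrough y) ∩ A.linesThrough x).ncard ≤ 1 :=
      (Set.ncard_le_ncard (Set.inter_subset_inter_left _ Set.sdiff_subset)).trans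
        (ncard_linesThrough_inter_le_one hF.1)
    have := ih hF.2
    omega

variable (A)

def NoThreeConcurrent {ι : Type*} (M : ι → Fin k) : Prop :=
  ∀ x, {j | x ∈ A.line (M j)}.ncard ≤ 2

def IsPolygon {n : ℕ} [NeZero n] (P : Fin n → ProjPoint) (M : Fin n → Fin k) : Prop :=
  ∀ i j, P i ∈ A.line (M j) ↔ j = i ∨ j = i + 1

variable {A}

theorem NoThreeConcurrent.comp {ι κ : Type*} [Finite ι] {M : ι → Fin k}
    (hM : A.NoThreeConcurrent M) {σ : κ → ι} (hσ : σ.Injective) : A.NoThreeConcurrent (M ∘ σ) :=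
  fun x => (Set.ncard_le_ncard_of_injOn σ (fun _ h => h) hσ.injOn).trans (hM x)

theorem NoThreeConcurrent.exists_isPolygon {n : ℕ} {M : Fin (n + 2) → Fin k}
    (hM : A.NoThreeConcurrent M) : ∃ P, A.IsPolygon P M := by
  choose P hP using fun i => A.exists_mem_lines (M i) (M (i + 1))
  refine ⟨P, fun i j => ⟨fun hj => ?_, ?_⟩⟩
  · by_contra! h
    exact (hM (P i)).not_gt ((Set.two_lt_ncard_iff).mpr
      ⟨i, i + 1, j, (hP i).1, (hP i).2, hj, by simp, Ne.symm h.1, Ne.symm h.2⟩)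
  · rintro (rfl | rfl)
    · exact (hP _).1
    · exact (hP _).2

namespace IsPolygon

variable {n : ℕ} {P : Fin (n + 3) → ProjPoint} {M : Fin (n + 3) → Fin k}

theorem mem_self (hP : A.IsPolygon P M) (i : Fin (n + 3)) : P i ∈ A.line (M i) :=
  (hP i i).mpr (Or.inl rfl)

theorem mem_add_one (hP : A.IsPolygon P M) (i : Fin (n + 3)) : P i ∈ A.line (M (i + 1)) :=
  (hP i (i + 1)).mpr (Or.inr rfl)

theorem injective (hP : A.IsPolygon P M) : M.Injective := by
  intro j j' h
  have h₁ := (hP j j').mp (h ▸ hP.mem_self j)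
  have hm : P (j - 1) ∈ A.line (M j) := by simpa using hP.mem_add_one (j - 1)
  have h₂ := (hP (j - 1) j').mp (h ▸ hm)
  rw [sub_add_cancel] at h₂
  rcases h₁ with h₁ | h₁
  · exact h₁.symm
  · rcases h₂ with h₂ | h₂
    · exact absurd (by rw [sub_add_cancel, ← h₁, h₂]) (Fin.add_one_add_one_ne_self (j - 1))
    · exact h₂.symm

theorem injective_points (hP : A.IsPolygon P M) : P.Injective := by
  intro i i' h
  rcases (hP i i').mp (h ▸ hP.mem_self i') with h₁ | h₁
  · exact h₁.symm
  · rcases (hP i (i' + 1)).mp (h ▸ hP.mem_add_one i') with h₂ | h₂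
    · exact absurd (h₁ ▸ h₂) (Fin.add_one_add_one_ne_self i)
    · simp [h₁] at h₂

theorem eq_of_mem_of_mem_s5 (hP : A.IsPolygon P M) {x : ProjPoint} {i : Fin (n + 3)}
    (hi : x ∈ A.line (M i)) (hi' : x ∈ A.line (M (i + 1))) : x = P i :=
  eq_of_mem_lines (hP.injective.ne (by simp)) hi hi' (hP.mem_self i) (hP.mem_add_one i)

theorem two_le_mult (hP : A.IsPolygon P M) (i : Fin (n + 3)) : 2 ≤ A.mult (P i) :=
  two_le_mult_of_mem_lines (hP.injective.ne (by simp)) (hP.mem_self i) (hP.mem_add_one i)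

theorem mem_range_of_mem_of_mem {v : Fin 3 → ProjPoint} {J : Fin 3 → Fin k}
    (hv : A.IsPolygon v J) {x : ProjPoint} {a b : Fin 3} (hab : a ≠ b)
    (ha : x ∈ A.line (J a)) (hb : x ∈ A.line (J b)) : x ∈ Set.range v := by
  have hconsec : ∀ a b : Fin 3, a ≠ b → ∃ i, a = i ∧ b = i + 1 ∨ a = i + 1 ∧ b = i := by decide
  obtain ⟨i, ⟨rfl, rfl⟩ | ⟨rfl, rfl⟩⟩ := hconsec a b hab
  · exact ⟨_, (hv.eq_of_mem_of_mem_s5 ha hb).symm⟩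
  · exact ⟨_, (hv.eq_of_mem_of_mem_s5 hb ha).symm⟩

theorem noThreeConcurrent {P : Fin 5 → ProjPoint} {M : Fin 5 → Fin k}
    (hP : A.IsPolygon P M) : A.NoThreeConcurrent M := by
  intro x
  by_contra! h
  obtain ⟨a, b, d, ha, hb, hd, hab, had, hbd⟩ := (Set.two_lt_ncard_iff).mp h
  have hmem : ∀ j, j = a ∨ j = b ∨ j = d → x ∈ A.line (M j) := by
    rintro j (rfl | rfl | rfl) <;> assumption
  -- among three sides of a pentagon, two are consecutive
  have hconsec : ∀ a b d : Fin 5, a ≠ b → a ≠ d → b ≠ d → ∃ i, (i = a ∨ i = b ∨ i = d) ∧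
      (i + 1 = a ∨ i + 1 = b ∨ i + 1 = d) ∧ ∃ e, (e = a ∨ e = b ∨ e = d) ∧ e ≠ i ∧ e ≠ i + 1 := by
    decide
  obtain ⟨i, hi, hi', e, he, hei, hei'⟩ := hconsec a b d hab had hbd
  have hx : x = P i := hP.eq_of_mem_of_mem_s5 (hmem i hi) (hmem _ hi')
  exact not_or.mpr ⟨hei, hei'⟩ ((hP i e).mp (hx ▸ hmem e he))

end IsPolygon

variable {c : ProjPoint}

theorem IsPolygon.mult_add_mult_le {P : Fin 5 → ProjPoint} {M : Fin 5 → Fin k}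
    (hP : A.IsPolygon P M) {a : ProjPoint} (hac : a ≠ c) : A.mult a + A.mult c ≤ k := by
  by_contra! h
  have hcover := forall_mem_or_mem_of_lt_mult_add_mult hac h
  have h5 : (Set.univ : Set (Fin 5)).ncard ≤
      ({j | a ∈ A.line (M j)} ∪ {j | c ∈ A.line (M j)}).ncard :=
    Set.ncard_le_ncard fun j _ => hcover (M j)
  have := Set.ncard_union_le {j | a ∈ A.line (M j)} {j | c ∈ A.line (M j)}
  have := hP.noThreeConcurrent a
  have := hP.noThreeConcurrent c
  rw [Set.ncard_univ, Nat.card_eq_fintype_card, Fintype.card_fin] at h5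
  omega

theorem t_eq_one_of_isPolygon {P : Fin 5 → ProjPoint} {M : Fin 5 → Fin k}
    (hP : A.IsPolygon P M) (hkq : k < 2 * q) (hc : A.mult c = q) : A.t q = 1 := by
  refine Set.ncard_eq_one.mpr ⟨c, Set.eq_singleton_iff_unique_mem.mpr ⟨hc, fun a ha => ?_⟩⟩
  by_contra hac
  have := hP.mult_add_mult_le hac
  rw [Set.mem_ofPred_eq] at ha
  omega

theorem exists_noThreeConcurrent_of_forall_exists_notMem {S : Set (Fin k)}
    (h : ∀ y, ∃ j ∈ S, y ∉ A.line j) :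
    ∃ J : Fin 3 → Fin k, A.NoThreeConcurrent J ∧ ∀ a, J a ∈ S := by
  obtain ⟨j₀, hj₀, -⟩ := h (Classical.arbitrary _)
  obtain ⟨y, hy, -⟩ := A.exists_mem_lines j₀ j₀
  obtain ⟨j₁, hj₁, hyj₁⟩ := h y
  have hj₀₁ : j₀ ≠ j₁ := by rintro rfl; exact hyj₁ hy
  obtain ⟨x, hx₀, hx₁⟩ := A.exists_mem_lines j₀ j₁
  obtain ⟨j₂, hj₂, hxj₂⟩ := h x
  refine ⟨![j₀, j₁, j₂], fun z => ?_, fun a => by fin_cases a <;> assumption⟩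
  by_contra! hz
  have hall : ∀ a, z ∈ A.line (![j₀, j₁, j₂] a) := by
    by_contra! ha
    obtain ⟨a, ha⟩ := ha
    have := Set.ncard_lt_card (s := {a | z ∈ A.line (![j₀, j₁, j₂] a)})
      fun h => ha (Set.eq_univ_iff_forall.mp h a)
    rw [Nat.card_eq_fintype_card, Fintype.card_fin] at this
    exact hz.not_ge (Nat.le_of_lt_succ this)
  have hzx : z = x := eq_of_mem_lines hj₀₁ (hall 0) (hall 1) hx₀ hx₁
  exact hxj₂ (hzx ▸ hall 2)

theorem noThreeConcurrent_sumElim {κ : Type*} [Finite κ] {I : Fin 2 → Fin k} {J : κ → Fin k}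
    (hI : I.Injective) (hcI : ∀ i, c ∈ A.line (I i)) (hcJ : ∀ a, c ∉ A.line (J a))
    (hJ : A.NoThreeConcurrent J)
    (hIJ : ∀ i x, x ∈ A.line (I i) → {a | x ∈ A.line (J a)}.ncard ≤ 1) :
    A.NoThreeConcurrent (Sum.elim I J) := by
  intro x
  have hsplit : {s | x ∈ A.line (Sum.elim I J s)}.ncard ≤
      {i | x ∈ A.line (I i)}.ncard + {a | x ∈ A.line (J a)}.ncard := by
    calc _ ≤ (Sum.inl '' {i | x ∈ A.line (I i)} ∪ Sum.inr '' {a | x ∈ A.line (J a)}).ncard := by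
          refine Set.ncard_le_ncard ?_
          rintro (i | a) h
          exacts [Or.inl ⟨i, h, rfl⟩, Or.inr ⟨a, h, rfl⟩]
      _ ≤ _ := (Set.ncard_union_le _ _).trans (add_le_add Set.ncard_image_le Set.ncard_image_le)
  by_cases hxc : x = c
  · subst hxc
    have hI2 := Set.ncard_le_card {i | x ∈ A.line (I i)}
    rw [Nat.card_eq_fintype_card, Fintype.card_fin] at hI2
    have hJ0 : {a | x ∈ A.line (J a)} = ∅ := Set.eq_empty_of_forall_notMem hcJ
    rw [hJ0, Set.ncard_empty] at hsplit
    omega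
  · have hI1 : {i | x ∈ A.line (I i)}.ncard ≤ 1 := (Set.ncard_le_one_iff).mpr fun {i i'} hi hi' =>
      by_contra fun hii' => hxc (eq_of_mem_lines (hI.ne hii') hi hi' (hcI i) (hcI i'))
    rcases Set.eq_empty_or_nonempty {i | x ∈ A.line (I i)} with hI0 | ⟨i, hi⟩
    · rw [hI0, Set.ncard_empty] at hsplit
      have := hJ x
      omega
    · have := hIJ i x hi
      omega

theorem exists_notMem_notMem_of_t_eq_one (hq : 3 ≤ q) (hkq : k + 1 = 2 * q)
    (hqmax : ∀ r, q < r → A.t r = 0) (hc : A.mult c = q) (ht : A.t q = 1)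
    (ht' : A.t (q - 1) = 0) (y : ProjPoint) : ∃ j, c ∉ A.line j ∧ y ∉ A.line j := by
  by_contra! h
  have hyc : y ≠ c := by
    rintro rfl
    have hall : A.linesThrough y = Set.univ :=
      Set.eq_univ_of_forall fun j => by_contra fun hj => hj (h j hj)
    rw [mult_eq_ncard_linesThrough, hall, Set.ncard_univ, Nat.card_eq_fintype_card,
      Fintype.card_fin] at hc
    omega
  have hk := le_mult_add_mult_of_forall_mem_or_mem fun j =>
    (em (c ∈ A.line j)).elim Or.inr fun hj => Or.inl (h j hj)
  have hyq := mult_le_of_t_eq_zero hqmax (by omega : 2 ≤ A.mult y)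
  obtain hy | hy : A.mult y = q - 1 ∨ A.mult y = q := by omega
  · exact (t_pos_of_mult_eq (by omega) hy).ne' ht'
  · obtain ⟨a, ha⟩ := Set.ncard_eq_one.mp ht
    have hya : y = a := by simpa [ha] using (show y ∈ {p | A.mult p = q} from hy)
    have hca : c = a := by simpa [ha] using (show c ∈ {p | A.mult p = q} from hc)
    exact hyc (hya.trans hca.symm)

theorem exists_isPolygon_of_t_eq_one (hq : 5 ≤ q) (hkq : k + 1 = 2 * q)
    (hqmax : ∀ r, q < r → A.t r = 0) (hc : A.mult c = q) (ht : A.t q = 1)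
    (ht' : A.t (q - 1) = 0) : ∃ (P : Fin 5 → ProjPoint) (M : Fin 5 → Fin k), A.IsPolygon P M := by
  classical
  obtain ⟨J, hJ, hcJ⟩ := exists_noThreeConcurrent_of_forall_exists_notMem (S := {j | c ∉ A.line j})
    fun y => exists_notMem_notMem_of_t_eq_one (by omega) hkq hqmax hc ht ht' y
  obtain ⟨v, hv⟩ := hJ.exists_isPolygon
  have hcv : c ∉ Finset.univ.image v := by
    simp only [Finset.mem_image, Finset.mem_univ, true_and, not_exists]
    exact fun a hca => hcJ a (hca ▸ hv.mem_self a)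
  have hpencil := mult_sub_card_le_ncard_linesThrough_diff (A := A) _ hcv
  have hcard : (Finset.univ.image v).card ≤ 3 := Finset.card_image_le.trans (by simp)
  obtain ⟨i₁, i₂, hi₁, hi₂, hi⟩ := (Set.one_lt_ncard_iff).mp (by omega : 1 < (A.linesThrough c \
    ⋃ x ∈ Finset.univ.image v, A.linesThrough x).ncard)
  have hIJ : ∀ i x, x ∈ A.line (![i₁, i₂] i) → {a | x ∈ A.line (J a)}.ncard ≤ 1 := by
    intro i x hx
    refine (Set.ncard_le_one_iff).mpr fun {a b} ha hb => by_contra fun hab => ?_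
    obtain ⟨e, rfl⟩ := hv.mem_range_of_mem_of_mem hab ha hb
    have hi : ![i₁, i₂] i ∈ A.linesThrough c \ ⋃ x ∈ Finset.univ.image v, A.linesThrough x := by
      fin_cases i
      exacts [hi₁, hi₂]
    exact hi.2 (Set.mem_biUnion (by simp) hx)
  have hNTC := noThreeConcurrent_sumElim (I := ![i₁, i₂])
    (by simp [Function.Injective, Fin.forall_fin_two, hi, hi.symm])
    (Fin.forall_fin_two.mpr ⟨hi₁.1, hi₂.1⟩) hcJ hJ hIJ
  obtain ⟨P, hP⟩ := (hNTC.comp finSumFinEquiv.symm.injective).exists_isPolygon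
  exact ⟨P, _, hP⟩

end LineArrangement

/-- Vertex `2i` of `C₁₀` becomes `inl i` (a point) and vertex `2j - 1` becomes `inr j` (a line). -/
noncomputable def pentagonLabel : Fin 5 ⊕ Fin 5 ≃ Fin 10 :=
  Equiv.ofBijective (Sum.elim (fun i => ⟨2 * i, by omega⟩) fun j => ⟨(2 * j + 9) % 10, by omega⟩)
    (by decide)

noncomputable abbrev pentagonGraph : SimpleGraph (Fin 5 ⊕ Fin 5) :=
  (SimpleGraph.cycleGraph 10).comap pentagonLabel

theorem pentagonGraph_adj_inl_inr :
    ∀ i j, pentagonGraph.Adj (Sum.inl i) (Sum.inr j) ↔ j = i ∨ j = i + 1 := by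
  decide

theorem pentagonGraph_not_adj_inl_inl : ∀ i i', ¬ pentagonGraph.Adj (Sum.inl i) (Sum.inl i') := by
  decide

theorem pentagonGraph_not_adj_inr_inr : ∀ j j', ¬ pentagonGraph.Adj (Sum.inr j) (Sum.inr j') := by
  decide

def pentagonGraphSwap : pentagonGraph ≃g pentagonGraph where
  toEquiv := (Equiv.sumComm _ _).trans (Equiv.sumCongr (Equiv.subRight 1) (Equiv.refl _))
  map_rel_iff' := by
    intro u v
    revert u v
    decide

namespace LineArrangement

variable {k : ℕ} {A : LineArrangement k}

theorem levi_adj_isLeft {x y : ↥A.sing ⊕ Fin k} (h : A.levi.Adj x y) : x.isLeft = !y.isLeft := by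
  rcases x with _ | _ <;> rcases y with _ | _
  exacts [h.elim, rfl, rfl, h.elim]

theorem exists_isPolygon_of_embedding_of_isLeft (e : pentagonGraph ↪g A.levi)
    (h0 : (e (Sum.inl 0)).isLeft) :
    ∃ (P : Fin 5 → ProjPoint) (M : Fin 5 → Fin k), A.IsPolygon P M := by
  have hside : ∀ i j, j = i ∨ j = i + 1 →
      (e (Sum.inl i)).isLeft = !(e (Sum.inr j)).isLeft := fun i j hij =>
    levi_adj_isLeft (e.map_rel_iff.mpr ((pentagonGraph_adj_inl_inr i j).mpr hij))
  have hinl : ∀ i, (e (Sum.inl i)).isLeft := by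
    intro i
    rw [← h0]
    refine Fin.apply_eq_apply_zero_of_forall_add_one (f := fun i => (e (Sum.inl i)).isLeft)
      (fun i => ?_) i
    rw [hside i (i + 1) (Or.inr rfl), hside (i + 1) (i + 1) (Or.inl rfl)]
  have hinr : ∀ j, (e (Sum.inr j)).isRight := fun j => by
    simpa [hinl j] using hside j j (Or.inl rfl)
  refine ⟨fun i => ((e (Sum.inl i)).getLeft (hinl i)).1, fun j => (e (Sum.inr j)).getRight (hinr j),
    fun i j => ?_⟩
  change A.levi.Adj (Sum.inl _) (Sum.inr _) ↔ _
  rw [Sum.inl_getLeft, Sum.inr_getRight, e.map_rel_iff, pentagonGraph_adj_inl_inr]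

theorem exists_isPolygon_of_embedding (e : pentagonGraph ↪g A.levi) :
    ∃ (P : Fin 5 → ProjPoint) (M : Fin 5 → Fin k), A.IsPolygon P M := by
  cases h0 : (e (Sum.inl 0)).isLeft
  · -- `e` sends the `inl` vertices to lines: exchange the two sides of the pentagon graph
    refine exists_isPolygon_of_embedding_of_isLeft (e.comp pentagonGraphSwap.toEmbedding) ?_
    have := levi_adj_isLeft (e.map_rel_iff.mpr ((pentagonGraph_adj_inl_inr 0 0).mpr (Or.inl rfl)))
    change (e (Sum.inr 0)).isLeft = true
    simpa [h0] using this.symm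
  · exact exists_isPolygon_of_embedding_of_isLeft e h0

def IsPolygon.leviEmbedding {P : Fin 5 → ProjPoint} {M : Fin 5 → Fin k} (hP : A.IsPolygon P M) :
    pentagonGraph ↪g A.levi where
  toFun := Sum.map (fun i => ⟨P i, hP.two_le_mult i⟩) M
  inj' := Function.Injective.sumMap (fun _ _ h => hP.injective_points (congrArg Subtype.val h))
    hP.injective
  map_rel_iff' := by
    rintro (i | j) (i' | j')
    · exact iff_of_false id (pentagonGraph_not_adj_inl_inl i i')
    · exact (hP i j').trans (pentagonGraph_adj_inl_inr i j').symm
    · exact (hP i' j).trans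
        ((pentagonGraph_adj_inl_inr i' j).symm.trans (pentagonGraph.adj_comm _ _))
    · exact iff_of_false id (pentagonGraph_not_adj_inr_inr j j')

theorem hasInducedCycle_levi_ten_iff :
    HasInducedCycle A.levi 10 ↔ ∃ (P : Fin 5 → ProjPoint) (M : Fin 5 → Fin k), A.IsPolygon P M := by
  have iso : pentagonGraph ≃g SimpleGraph.cycleGraph 10 := SimpleGraph.Iso.comap pentagonLabel _
  constructor
  · rintro ⟨e⟩
    exact exists_isPolygon_of_embedding (e.comp iso.toEmbedding)
  · rintro ⟨P, M, hP⟩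
    exact ⟨hP.leviEmbedding.comp iso.symm.toEmbedding⟩

end LineArrangement

theorem inducedCycle_ten_iff_tq_eq_one_of_k_eq_general (k q : ℕ) (hk : 10 ≤ k)
    (A : LineArrangement k)
    (hqmax : ∀ r : ℕ, q < r → A.t r = 0)
    (c : ProjPoint) (hc : ∀ i : Fin k, (i : ℕ) < q → c ∈ A.line i)
    (hkq : k = 2 * q - 1) (h0 : A.t (k - q) = 0) :
    HasInducedCycle A.levi 10 ↔ A.t q = 1 := by
  have hmult : A.mult c = q := A.mult_eq_of_forall_lt_mem (by omega) (by omega) hqmax hc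
  rw [A.hasInducedCycle_levi_ten_iff]
  constructor
  · rintro ⟨P, M, hP⟩
    exact A.t_eq_one_of_isPolygon hP (by omega) hmult
  · intro ht
    have ht' : A.t (q - 1) = 0 := by rwa [show q - 1 = k - q by omega]
    exact A.exists_isPolygon_of_t_eq_one (by omega) (by omega) hqmax hmult ht ht'

/-- `k ≥ 10` lines, `q` maximal with `t_q ≠ 0`, lines `ℓ_0, …, ℓ_{q-1}` through a
common point, `k = 2q - 1` and `t_{k-q} = 0`. Then the Levi graph has an induced cycle of
length `10` iff `t_q = 1`. -/
theorem inducedCycle_ten_iff_tq_eq_one_of_k_eq (k q : ℕ) (hk : 10 ≤ k)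
    (A : LineArrangement k)
    (htq : A.t q ≠ 0) (hqmax : ∀ r : ℕ, q < r → A.t r = 0)
    (c : ProjPoint) (hc : ∀ i : Fin k, (i : ℕ) < q → c ∈ A.line i)
    (hkq : k = 2 * q - 1) (h0 : A.t (k - q) = 0) :
    HasInducedCycle A.levi 10 ↔ A.t q = 1 :=
  inducedCycle_ten_iff_tq_eq_one_of_k_eq_general k q hk A hqmax c hc hkq h0
end

section
/- Let L be the line arrangement in the complex projective plane consisting of the six lines x = 0, y = 0, z = 0, x − y = 0, x − z = 0 and y − z = 0 (in homogeneous coordinates [x:y:z]). Then the Levi graph G(L) contains an induced cycle of length 8 and contains no induced cycle of length greater than 8; that is, the longest induced cycle of G(L) has length 8. -/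
open scoped LinearAlgebra.Projectivization
open Projectivization

/-! The six lines form the braid arrangement `A₃`: its singular points are the four triple points
`[1:0:0], [0:1:0], [0:0:1], [1:1:1]` and the three double points `[1:1:0], [1:0:1], [0:1:1]`
(any two of the lines meet at one of them, the intersection point being the cross product of their
coefficient vectors), so its Levi graph is a fixed bipartite graph on `7 + 6` vertices, containing
an induced octagon. Double counting shows that an induced cycle of a bipartite incidence graph
passes through equally many points and lines, each of its points lying on exactly two of its
lines. A longer induced cycle would therefore use `m ≥ 5` lines and `m` points each on exactly two
of them, but for every choice of at least five lines there are fewer such points. -/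

open Finset Function Matrix SimpleGraph

lemma exists_equiv_apply_eq_of_range_eq {ι X : Type*} [Finite ι] {f g : ι → X}
    (hf : Injective f) (h : Set.range f = Set.range g) : ∃ e : ι ≃ ι, ∀ i, f (e i) = g i := by
  have hσ : ∀ i, f i ∈ Set.range g := fun i => h ▸ Set.mem_range_self i
  choose σ hσ using hσ
  have hσinj : Injective σ := fun i i' hii' => hf (by rw [← hσ, ← hσ, hii'])
  let e := Equiv.ofBijective σ (Finite.injective_iff_bijective.1 hσinj)
  exact ⟨e.symm, fun i => by rw [← hσ]; exact congrArg g (e.apply_symm_apply i)⟩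

lemma SimpleGraph.Iso.hasInducedCycle_iff {V W : Type*} {G : SimpleGraph V} {H : SimpleGraph W}
    (e : G ≃g H) {n : ℕ} : HasInducedCycle G n ↔ HasInducedCycle H n :=
  ⟨fun ⟨f⟩ => ⟨f.trans e.toEmbedding⟩, fun ⟨f⟩ => ⟨f.trans e.symm.toEmbedding⟩⟩

lemma HasInducedCycle.exists_finset_card_filter_adj_eq_two {V : Type*} [DecidableEq V]
    {G : SimpleGraph V} [DecidableRel G.Adj] {n : ℕ} (hn : 3 ≤ n) (h : HasInducedCycle G n) :
    ∃ S : Finset V, #S = n ∧ ∀ v ∈ S, #{w ∈ S | G.Adj v w} = 2 := by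
  obtain ⟨m, rfl⟩ : ∃ m, n = m + 3 := ⟨n - 3, by omega⟩
  obtain ⟨f⟩ := h
  refine ⟨univ.image f, by simp [card_image_of_injective _ f.injective], ?_⟩
  simp only [mem_image, mem_univ, true_and, forall_exists_index, forall_apply_eq_imp_iff]
  intro i
  have hnbrs : {w ∈ univ.image f | G.Adj (f i) w} =
      ((cycleGraph (m + 3)).neighborFinset i).image f := by
    ext w
    simp only [mem_filter, mem_image, mem_univ, true_and, mem_neighborFinset]
    constructor
    · rintro ⟨⟨j, rfl⟩, hij⟩
      exact ⟨j, f.map_rel_iff.1 hij, rfl⟩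
    · rintro ⟨j, hij, rfl⟩
      exact ⟨⟨j, rfl⟩, f.map_rel_iff.2 hij⟩
  rw [hnbrs, card_image_of_injective _ f.injective, card_neighborFinset_eq_degree,
    cycleGraph_degree_three_le]

def SimpleGraph.incidenceGraph {α β : Type*} (r : α → β → Prop) : SimpleGraph (α ⊕ β) where
  Adj v w :=
    match v, w with
    | .inl a, .inr b => r a b
    | .inr b, .inl a => r a b
    | _, _ => False
  symm := ⟨by rintro (a | b) (a' | b') h <;> exact h⟩
  loopless := ⟨by rintro (a | b) h <;> exact h⟩

namespace SimpleGraph.incidenceGraph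

variable {α β : Type*} {r : α → β → Prop}

@[simp] lemma adj_inl_inr {a : α} {b : β} : (incidenceGraph r).Adj (.inl a) (.inr b) ↔ r a b :=
  Iff.rfl

@[simp] lemma adj_inr_inl {a : α} {b : β} : (incidenceGraph r).Adj (.inr b) (.inl a) ↔ r a b :=
  Iff.rfl

@[simp] lemma not_adj_inl_inl {a a' : α} : ¬ (incidenceGraph r).Adj (.inl a) (.inl a') := id

@[simp] lemma not_adj_inr_inr {b b' : β} : ¬ (incidenceGraph r).Adj (.inr b) (.inr b') := id

instance [∀ a b, Decidable (r a b)] : DecidableRel (incidenceGraph r).Adj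
  | .inl _, .inl _ => .isFalse id
  | .inl a, .inr b => inferInstanceAs (Decidable (r a b))
  | .inr b, .inl a => inferInstanceAs (Decidable (r a b))
  | .inr _, .inr _ => .isFalse id

def congr {α' β' : Type*} {r' : α' → β' → Prop} (e₁ : α ≃ α') (e₂ : β ≃ β')
    (h : ∀ a b, r' (e₁ a) (e₂ b) ↔ r a b) : incidenceGraph r ≃g incidenceGraph r' where
  toEquiv := e₁.sumCongr e₂
  map_rel_iff' := by rintro (a | b) (a' | b') <;> simp [h]

variable [∀ a b, Decidable (r a b)]

lemma card_filter_adj_inl (S : Finset (α ⊕ β)) (a : α) :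
    #{w ∈ S | (incidenceGraph r).Adj (.inl a) w} = #{b ∈ S.toRight | r a b} := by
  have hnbrs : {w ∈ S | (incidenceGraph r).Adj (.inl a) w} =
      {b ∈ S.toRight | r a b}.map Embedding.inr := by
    ext (a' | b) <;> simp
  rw [hnbrs, card_map]

lemma card_filter_adj_inr (S : Finset (α ⊕ β)) (b : β) :
    #{w ∈ S | (incidenceGraph r).Adj (.inr b) w} = #{a ∈ S.toLeft | r a b} := by
  have hnbrs : {w ∈ S | (incidenceGraph r).Adj (.inr b) w} =
      {a ∈ S.toLeft | r a b}.map Embedding.inl := by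
    ext (a | b') <;> simp
  rw [hnbrs, card_map]

lemma exists_of_hasInducedCycle [DecidableEq α] [DecidableEq β] {n : ℕ} (hn : 3 ≤ n)
    (h : HasInducedCycle (incidenceGraph r) n) :
    ∃ (P : Finset α) (L : Finset β), #P = #L ∧ 2 * #L = n ∧ ∀ a ∈ P, #{b ∈ L | r a b} = 2 := by
  obtain ⟨S, hS, hdeg⟩ := h.exists_finset_card_filter_adj_eq_two hn
  have hP : ∀ a ∈ S.toLeft, #{b ∈ S.toRight | r a b} = 2 := fun a ha => by
    rw [← card_filter_adj_inl, hdeg _ (mem_toLeft.1 ha)]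
  have hL : ∀ b ∈ S.toRight, #{a ∈ S.toLeft | r a b} = 2 := fun b hb => by
    rw [← card_filter_adj_inr, hdeg _ (mem_toRight.1 hb)]
  have hcount := card_mul_eq_card_mul r hP hL
  have hsplit := S.card_toLeft_add_card_toRight
  exact ⟨S.toLeft, S.toRight, by omega, by omega, hP⟩

end SimpleGraph.incidenceGraph

lemma mk_mem_projLine_iff {v : Fin 3 → ℂ} (hv : v ≠ 0) (u : Fin 3 → ℂ) :
    mk ℂ v hv ∈ projLine (u 0) (u 1) (u 2) ↔ u ⬝ᵥ v = 0 := by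
  rw [vec3_dotProduct]
  constructor
  · intro h
    exact h v (by rw [submodule_mk]; exact Submodule.mem_span_singleton_self v)
  · intro h w hw
    rw [submodule_mk, Submodule.mem_span_singleton] at hw
    obtain ⟨t, rfl⟩ := hw
    simp only [Pi.smul_apply, smul_eq_mul]
    linear_combination t * h

lemma eq_mk_crossProduct_of_mem_projLine {u w : Fin 3 → ℂ} (huw : u ⨯₃ w ≠ 0) {p : ProjPoint}
    (hu : p ∈ projLine (u 0) (u 1) (u 2)) (hw : p ∈ projLine (w 0) (w 1) (w 2)) :
    p = mk ℂ (u ⨯₃ w) huw := by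
  induction p using Projectivization.ind with
  | h v hv =>
    rw [mk_mem_projLine_iff] at hu hw
    rw [mk_eq_mk_iff_crossProduct_eq_zero, cross_cross_eq_smul_sub_smul', dotProduct_comm, hu,
      hw, zero_smul, zero_smul, sub_zero]

lemma RingHom.comp_crossProduct {R S : Type*} [CommRing R] [CommRing S] (f : R →+* S)
    (u w : Fin 3 → R) : (f ∘ u) ⨯₃ (f ∘ w) = f ∘ (u ⨯₃ w) := by
  ext k
  fin_cases k <;> simp [cross_apply]

lemma intCast_comp_ne_zero {ι R : Type*} [AddGroupWithOne R] [CharZero R] {x : ι → ℤ}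
    (hx : x ≠ 0) : ((↑) ∘ x : ι → R) ≠ 0 :=
  fun h => hx (funext fun k => by simpa using congrFun h k)

lemma LineArrangement.mem_sing_iff {k : ℕ} (A : LineArrangement k) {p : ProjPoint} :
    p ∈ A.sing ↔ ∃ i i', i ≠ i' ∧ p ∈ A.line i ∧ p ∈ A.line i' := by
  change 1 < Set.ncard _ ↔ _
  rw [Set.one_lt_ncard]
  constructor
  · rintro ⟨i, hi, i', hi', hii'⟩
    exact ⟨i, i', hii', hi, hi'⟩
  · rintro ⟨i, i', hii', hi, hi'⟩
    exact ⟨i, hi, i', hi', hii'⟩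

lemma LineArrangement.levi_eq_incidenceGraph {k : ℕ} (A : LineArrangement k) :
    A.levi = incidenceGraph fun (p : A.sing) i => (p : ProjPoint) ∈ A.line i := by
  ext (p | i) (q | j) <;> rfl

def braidCoeff : Fin 6 → Fin 3 → ℤ :=
  ![![1, 0, 0], ![0, 1, 0], ![0, 0, 1], ![1, -1, 0], ![1, 0, -1], ![0, 1, -1]]

def braidCoord : Fin 7 → Fin 3 → ℤ :=
  ![![1, 0, 0], ![0, 1, 0], ![0, 0, 1], ![1, 1, 1], ![1, 1, 0], ![1, 0, 1], ![0, 1, 1]]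

def BraidIncident (j : Fin 7) (i : Fin 6) : Prop := braidCoeff i ⬝ᵥ braidCoord j = 0

instance (j : Fin 7) (i : Fin 6) : Decidable (BraidIncident j i) :=
  inferInstanceAs (Decidable (_ = _))

lemma braidCoord_ne_zero : ∀ j, braidCoord j ≠ 0 := by decide

lemma braidCoeff_cross_ne_zero : ∀ i i', i ≠ i' → braidCoeff i ⨯₃ braidCoeff i' ≠ 0 := by decide

lemma exists_braidIncident_of_ne :
    ∀ i i', i ≠ i' → ∃ j, BraidIncident j i ∧ BraidIncident j i' := by
  decide

lemma exists_ne_braidIncident :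
    ∀ j, ∃ i i', i ≠ i' ∧ BraidIncident j i ∧ BraidIncident j i' := by
  decide

lemma eq_of_braidIncident_iff :
    ∀ j j', (∀ i, BraidIncident j i ↔ BraidIncident j' i) → j = j' := by
  decide

/-- With all six lines only the three double points lie on exactly two of them; without a line
`ℓ`, the two triple points on `ℓ` and the two double points off `ℓ` do. -/
lemma card_filter_card_braidIncident_eq_two_lt :
    ∀ L : Finset (Fin 6), 5 ≤ #L → #{j | #{i ∈ L | BraidIncident j i} = 2} < #L := by
  decide

/-- The octagon `[1:1:0], z, [1:0:0], y, [1:0:1], x - z, [1:1:1], x - y`. -/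
def braidOctagon : Fin 8 → Fin 7 ⊕ Fin 6 :=
  ![.inl 4, .inr 2, .inl 0, .inr 1, .inl 5, .inr 4, .inl 3, .inr 3]

lemma braidOctagon_adj_iff : ∀ a b : Fin 8,
    (incidenceGraph BraidIncident).Adj (braidOctagon a) (braidOctagon b) ↔
      (cycleGraph 8).Adj a b := by
  decide

lemma hasInducedCycle_braid_eight : HasInducedCycle (incidenceGraph BraidIncident) 8 :=
  ⟨{ toFun := braidOctagon
     inj' := by decide
     map_rel_iff' := braidOctagon_adj_iff _ _ }⟩

lemma not_hasInducedCycle_braid {n : ℕ} (hn : 8 < n) :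
    ¬ HasInducedCycle (incidenceGraph BraidIncident) n := by
  intro h
  obtain ⟨P, L, hPL, hL, hP⟩ := incidenceGraph.exists_of_hasInducedCycle (by omega) h
  have hsub : P ⊆ ({j | #{i ∈ L | BraidIncident j i} = 2} : Finset (Fin 7)) := fun j hj => by
    simpa using hP j hj
  have hfew := card_filter_card_braidIncident_eq_two_lt L (by omega)
  have hle := card_le_card hsub
  omega

def braidLine (i : Fin 6) : Set ProjPoint :=
  projLine (braidCoeff i 0) (braidCoeff i 1) (braidCoeff i 2)

lemma range_braidLine : Set.range braidLine =
    {projLine 1 0 0, projLine 0 1 0, projLine 0 0 1,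
     projLine 1 (-1) 0, projLine 1 0 (-1), projLine 0 1 (-1)} := by
  have : braidLine = ![projLine 1 0 0, projLine 0 1 0, projLine 0 0 1,
      projLine 1 (-1) 0, projLine 1 0 (-1), projLine 0 1 (-1)] := by
    funext i
    fin_cases i <;> simp [braidLine, braidCoeff]
  simp only [this, range_cons, range_empty, Set.union_empty, Set.singleton_union]

noncomputable def braidPoint (j : Fin 7) : ProjPoint :=
  mk ℂ ((↑) ∘ braidCoord j) (intCast_comp_ne_zero (braidCoord_ne_zero j))

lemma braidPoint_mem_braidLine_iff {j : Fin 7} {i : Fin 6} :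
    braidPoint j ∈ braidLine i ↔ BraidIncident j i := by
  refine (mk_mem_projLine_iff _ ((↑) ∘ braidCoeff i)).trans ?_
  rw [BraidIncident, vec3_dotProduct, vec3_dotProduct]
  simp only [Function.comp_apply]
  norm_cast

lemma braidPoint_injective : Injective braidPoint := fun j j' h =>
  eq_of_braidIncident_iff j j' fun i => by
    rw [← braidPoint_mem_braidLine_iff, ← braidPoint_mem_braidLine_iff, h]

lemma exists_braidPoint_eq_of_mem {i i' : Fin 6} (hii' : i ≠ i') {p : ProjPoint}
    (hi : p ∈ braidLine i) (hi' : p ∈ braidLine i') : ∃ j, braidPoint j = p := by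
  obtain ⟨j, hj, hj'⟩ := exists_braidIncident_of_ne i i' hii'
  have hcross : ((↑) ∘ braidCoeff i : Fin 3 → ℂ) ⨯₃ ((↑) ∘ braidCoeff i') ≠ 0 := by
    rw [show ((↑) : ℤ → ℂ) = Int.castRingHom ℂ from rfl, RingHom.comp_crossProduct]
    exact intCast_comp_ne_zero (braidCoeff_cross_ne_zero i i' hii')
  rw [← braidPoint_mem_braidLine_iff] at hj hj'
  exact ⟨j, (eq_mk_crossProduct_of_mem_projLine hcross hj hj').trans
    (eq_mk_crossProduct_of_mem_projLine hcross hi hi').symm⟩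

namespace LineArrangement

variable (A : LineArrangement 6) (e : Fin 6 ≃ Fin 6)

lemma sing_eq_range_braidPoint (he : ∀ i, A.line (e i) = braidLine i) :
    A.sing = Set.range braidPoint := by
  ext p
  rw [A.mem_sing_iff]
  constructor
  · rintro ⟨i, i', hii', hi, hi'⟩
    rw [← e.apply_symm_apply i, he] at hi
    rw [← e.apply_symm_apply i', he] at hi'
    exact exists_braidPoint_eq_of_mem (e.symm.injective.ne hii') hi hi'
  · rintro ⟨j, rfl⟩
    obtain ⟨i, i', hii', hi, hi'⟩ := exists_ne_braidIncident j
    rw [← braidPoint_mem_braidLine_iff, ← he] at hi hi'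
    exact ⟨e i, e i', e.injective.ne hii', hi, hi'⟩

noncomputable def braidIso (he : ∀ i, A.line (e i) = braidLine i) :
    incidenceGraph BraidIncident ≃g
      incidenceGraph fun (p : A.sing) i => (p : ProjPoint) ∈ A.line i :=
  incidenceGraph.congr
    ((Equiv.ofInjective _ braidPoint_injective).trans
      (Equiv.setCongr (A.sing_eq_range_braidPoint e he).symm)) e
    fun j i => by
      rw [he]
      exact braidPoint_mem_braidLine_iff

end LineArrangement

/-- the arrangement of the six lines `x = 0`, `y = 0`, `z = 0`, `x - y = 0`,
`x - z = 0`, `y - z = 0`: its Levi graph has an induced cycle of length `8` and no longer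
induced cycle. -/
theorem six_lines_longest_inducedCycle (A : LineArrangement 6)
    (hA : Set.range A.line =
      {projLine 1 0 0, projLine 0 1 0, projLine 0 0 1,
       projLine 1 (-1) 0, projLine 1 0 (-1), projLine 0 1 (-1)}) :
    HasInducedCycle A.levi 8 ∧ ∀ n : ℕ, 8 < n → ¬ HasInducedCycle A.levi n := by
  obtain ⟨e, he⟩ := exists_equiv_apply_eq_of_range_eq A.inj (hA.trans range_braidLine.symm)
  have hiso := A.braidIso e he
  rw [A.levi_eq_incidenceGraph]
  exact ⟨hiso.hasInducedCycle_iff.1 hasInducedCycle_braid_eight,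
    fun n hn h => not_hasInducedCycle_braid hn (hiso.hasInducedCycle_iff.2 h)⟩
end
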